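/- Message-entropy bound under the K-hop change of measure: with U_ℓ := (M̃_ℓ, Ỹ₀^{T−1},…,Ỹ_k^{T−1}, T), for every ℓ ∈ {1,…,k} there is a correction term o(n) with o(n)/n → 0 such that H(M̃_ℓ) = n·I(Ỹ₀,…,Ỹ_k; U_ℓ) + log Δ_k + o(n), and consequently n·R_ℓ ≥ H(M̃_ℓ) ≥ n·I(U_ℓ; Ỹ_{ℓ−1}) + log Δ_k + o(n). -/

import Mathlib

open Filter

noncomputable section

/-- `p` is a probability mass function on the finite alphabet `α`. -/
def IsPMF {α : Type*} [Fintype α] (p : α → ℝ) : Prop :=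
  (∀ a, 0 ≤ p a) ∧ ∑ a, p a = 1

open Classical in
/-- Probability that the random variable `X` takes the value `a`, under the pmf `p`. -/
def probEq {Ω α : Type*} [Fintype Ω] (p : Ω → ℝ) (X : Ω → α) (a : α) : ℝ :=
  ∑ ω, if X ω = a then p ω else 0

/-- Shannon entropy (base 2) of the random variable `X` under the pmf `p`. -/
def entOf {Ω α : Type*} [Fintype Ω] (p : Ω → ℝ) (X : Ω → α) : ℝ :=
  -∑ ω, p ω * Real.logb 2 (probEq p X (X ω))

/-- Conditional Shannon entropy `H(X | Y)` under the pmf `p`. -/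
def condEntOf {Ω α β : Type*} [Fintype Ω] (p : Ω → ℝ) (X : Ω → α) (Y : Ω → β) : ℝ :=
  entOf p (fun ω => (X ω, Y ω)) - entOf p Y

/-- Mutual information `I(X ; Y)` under the pmf `p`. -/
def miOf {Ω α β : Type*} [Fintype Ω] (p : Ω → ℝ) (X : Ω → α) (Y : Ω → β) : ℝ :=
  entOf p X + entOf p Y - entOf p (fun ω => (X ω, Y ω))

/-- Conditional mutual information `I(X ; Y | Z)` under the pmf `p`. -/
def condMIOf {Ω α β γ : Type*} [Fintype Ω] (p : Ω → ℝ) (X : Ω → α) (Y : Ω → β)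
    (Z : Ω → γ) : ℝ :=
  condEntOf p X Z + condEntOf p Y Z - condEntOf p (fun ω => (X ω, Y ω)) Z

open Classical in
/-- Probability of the set `S` under the pmf `p`. -/
def probSet {Ω : Type*} [Fintype Ω] (p : Ω → ℝ) (S : Set Ω) : ℝ :=
  ∑ ω, if ω ∈ S then p ω else 0

open Classical in
/-- Number of occurrences of the symbol `a` in the sequence `w`. -/
def Ncount {W : Type*} {n : ℕ} (w : Fin n → W) (a : W) : ℕ :=
  (Finset.univ.filter (fun i => w i = a)).card

/-- The strongly typical set `T_μ⁽ⁿ⁾(P)`. -/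
def typicalSet {W : Type*} [Fintype W] (P : W → ℝ) (μ : ℝ) (n : ℕ) : Set (Fin n → W) :=
  {w | ∀ a, |((Ncount w a : ℝ)) / n - P a| ≤ μ ∧ (P a = 0 → Ncount w a = 0)}

/-- The typicality parameter `μ_n = n^{-1/3}`. -/
def μseq (n : ℕ) : ℝ := (n : ℝ) ^ (-(1/3 : ℝ))

section KHop

variable (k : ℕ) (Y : ℕ → Type) [∀ i, Fintype (Y i)] [∀ i, Nonempty (Y i)]

/-- The index `j` viewed as an element of `Fin (k+1)`. -/
def idxLo (j : Fin k) : Fin (k + 1) := ⟨(j : ℕ), Nat.lt_succ_of_lt j.isLt⟩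

/-- The index `j+1` viewed as an element of `Fin (k+1)`. -/
def idxHi (j : Fin k) : Fin (k + 1) := ⟨(j : ℕ) + 1, Nat.succ_lt_succ j.isLt⟩

variable (P : (∀ i : Fin (k + 1), Y i) → ℝ)

/-- The i.i.d. law of the source tuple `(Y₀ⁿ,…,Y_kⁿ)` under hypothesis `H = 0`. -/
def iidK (n : ℕ) (ys : ∀ i : Fin (k + 1), Fin n → Y i) : ℝ :=
  ∏ t : Fin n, P (fun i => ys i t)

open Classical in
/-- The marginal pmf of `Y_i` under `P`. -/
def margK (i : Fin (k + 1)) (c : Y i) : ℝ :=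
  ∑ y : ∀ i : Fin (k + 1), Y i, if y i = c then P y else 0

/-- The product of the marginals `P_{Y₀}·P_{Y₁}⋯P_{Y_k}`. -/
def prodMargK (y : ∀ i : Fin (k + 1), Y i) : ℝ := ∏ i, margK k Y P i (y i)

/-- The i.i.d. law of the source tuple under hypothesis `H = 1` (product of marginals). -/
def iidQK (n : ℕ) (ys : ∀ i : Fin (k + 1), Fin n → Y i) : ℝ :=
  ∏ t : Fin n, prodMargK k Y P (fun i => ys i t)

open Classical in
/-- The pairwise marginal `P_{Y_j Y_{j+1}}` of `P`. -/
def pairMargK (j : Fin k) (a : Y (j : ℕ)) (b : Y ((j : ℕ) + 1)) : ℝ :=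
  ∑ y : ∀ i : Fin (k + 1), Y i, if y (idxLo k j) = a ∧ y (idxHi k j) = b then P y else 0

open Classical in
/-- `P` forms the Markov chain `Y₀ → Y₁ → ⋯ → Y_k`. -/
def IsMarkovChainK : Prop :=
  ∀ y : ∀ i : Fin (k + 1), Y i,
    P y * ∏ i ∈ Finset.univ.filter (fun i : Fin (k + 1) => 0 < (i : ℕ) ∧ (i : ℕ) < k),
        margK k Y P i (y i)
      = ∏ j : Fin k, pairMargK k Y P j (y (idxLo k j)) (y (idxHi k j))

/-- Extension of a source tuple to all natural indices (junk beyond `k`). -/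
def extendTup (n : ℕ) (ys : ∀ i : Fin (k + 1), Fin n → Y i) (ℓ : ℕ) : Fin n → Y ℓ :=
  if h : ℓ < k + 1 then ys ⟨ℓ, h⟩ else fun _ => Classical.arbitrary (Y ℓ)

/-- The messages computed recursively from the encoders:
`msgRec φ ys' ℓ` is the message `M_{ℓ+1}`. -/
def msgRec (n : ℕ) (φ : ∀ ℓ : ℕ, (Fin n → Y ℓ) → ℕ → ℕ)
    (ys' : ∀ ℓ : ℕ, Fin n → Y ℓ) : ℕ → ℕ
  | 0 => φ 0 (ys' 0) 0
  | (ℓ + 1) => φ (ℓ + 1) (ys' (ℓ + 1)) (msgRec n φ ys' ℓ)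

/-- A source tuple viewed as one sequence over the product alphabet. -/
def tupleSeq {n : ℕ} (ys : ∀ i : Fin (k + 1), Fin n → Y i) :
    Fin n → (∀ i : Fin (k + 1), Y i) :=
  fun t i => ys i t

/-- The acceptance region `A_k` of the decision center `R_k`: the tuples on which the
guess is `Ĥ_k = 0` (decision `false`). -/
def acceptSet (n : ℕ) (φ : ∀ ℓ : ℕ, (Fin n → Y ℓ) → ℕ → ℕ)
    (g : (Fin n → Y k) → ℕ → Bool) : Set (∀ i : Fin (k + 1), Fin n → Y i) :=
  {ys | g (extendTup k Y n ys k) (msgRec Y n φ (extendTup k Y n ys) (k - 1)) = false}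

/-- The set `D_k`: the acceptance region intersected with the strongly typical set. -/
def DsetCM (n : ℕ) (φ : ∀ ℓ : ℕ, (Fin n → Y ℓ) → ℕ → ℕ)
    (g : (Fin n → Y k) → ℕ → Bool) : Set (∀ i : Fin (k + 1), Fin n → Y i) :=
  acceptSet k Y n φ g ∩ {ys | tupleSeq k Y ys ∈ typicalSet P (μseq n) n}

/-- `Δ_k = Pr[(Y₀ⁿ,…,Y_kⁿ) ∈ D_k]` under `H = 0`. -/
def DeltaCM (n : ℕ) (φ : ∀ ℓ : ℕ, (Fin n → Y ℓ) → ℕ → ℕ)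
    (g : (Fin n → Y k) → ℕ → Bool) : ℝ :=
  probSet (iidK k Y P n) (DsetCM k Y P n φ g)

open Classical in
/-- The change-of-measure pmf of `(Ỹ₀ⁿ,…,Ỹ_kⁿ)`: the `H = 0` law conditioned on `D_k`. -/
def ptildeCM (n : ℕ) (φ : ∀ ℓ : ℕ, (Fin n → Y ℓ) → ℕ → ℕ)
    (g : (Fin n → Y k) → ℕ → Bool) (ys : ∀ i : Fin (k + 1), Fin n → Y i) : ℝ :=
  if ys ∈ DsetCM k Y P n φ g then iidK k Y P n ys / DeltaCM k Y P n φ g else 0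

/-- The pmf of `((Ỹ₀ⁿ,…,Ỹ_kⁿ), T)` with `T` uniform on `{1,…,n}` independent of the rest. -/
def pfullCM (n : ℕ) (φ : ∀ ℓ : ℕ, (Fin n → Y ℓ) → ℕ → ℕ)
    (g : (Fin n → Y k) → ℕ → Bool)
    (ω : (∀ i : Fin (k + 1), Fin n → Y i) × Fin n) : ℝ :=
  ptildeCM k Y P n φ g ω.1 / n

/-- The random variable `M̃_{j+1}` (the message of hop `j+1` applied to the tilde sources). -/
def MtilRV (n : ℕ) (φ : ∀ ℓ : ℕ, (Fin n → Y ℓ) → ℕ → ℕ) (j : ℕ)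
    (ω : (∀ i : Fin (k + 1), Fin n → Y i) × Fin n) : ℕ :=
  msgRec Y n φ (extendTup k Y n ω.1) j

open Classical in
/-- The prefixes `(Ỹ₀^{T−1},…,Ỹ_k^{T−1})` as a random variable. -/
def prefixAll (n : ℕ) (ω : (∀ i : Fin (k + 1), Fin n → Y i) × Fin n) :
    ∀ i : Fin (k + 1), Fin n → Option (Y i) :=
  fun i t => if (t : ℕ) < (ω.2 : ℕ) then some (ω.1 i t) else none

/-- The auxiliary random variable `U_{j+1} := (M̃_{j+1}, Ỹ₀^{T−1},…,Ỹ_k^{T−1}, T)`. -/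
def UvarCM (n : ℕ) (φ : ∀ ℓ : ℕ, (Fin n → Y ℓ) → ℕ → ℕ) (j : ℕ)
    (ω : (∀ i : Fin (k + 1), Fin n → Y i) × Fin n) :
    ℕ × (∀ i : Fin (k + 1), Fin n → Option (Y i)) × Fin n :=
  (MtilRV k Y n φ j ω, prefixAll k Y n ω, ω.2)

/-- The type-I error probability `α_{k,n} = Pr[Ĥ_k = 1 | H = 0]`. -/
def alphaCM (n : ℕ) (φ : ∀ ℓ : ℕ, (Fin n → Y ℓ) → ℕ → ℕ)
    (g : (Fin n → Y k) → ℕ → Bool) : ℝ :=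
  probSet (iidK k Y P n) ((acceptSet k Y n φ g)ᶜ)

/-- The type-II error probability `β_{k,n} = Pr[Ĥ_k = 0 | H = 1]`. -/
def betaCM (n : ℕ) (φ : ∀ ℓ : ℕ, (Fin n → Y ℓ) → ℕ → ℕ)
    (g : (Fin n → Y k) → ℕ → Bool) : ℝ :=
  probSet (iidQK k Y P n) (acceptSet k Y n φ g)

end KHop

/-!
Take `o(n) := H(M̃_ℓ) − n·I(Ỹ_T; U_ℓ) − log Δ_k`, so that the identity holds by definition and the
content is `o(n)/n → 0`. Adjoining `Ỹ_T` to `U_ℓ` turns the prefix `Ỹ^{T−1}` into `Ỹ^T`, so the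
chain rule over `T` telescopes to `n·I(Ỹ_T; U_ℓ) = n·H(Ỹ_T) + H(M̃_ℓ) − H(Ỹⁿ)`; and since `Ỹⁿ` is
the i.i.d. law conditioned on `D_k`, `H(Ỹⁿ) = log Δ_k + E[−log Pⁿ(Ỹⁿ)]`. Hence
`o(n) = E[−log Pⁿ(Ỹⁿ)] − n·H(Ỹ_T)`. On the typical set `−log Pⁿ(yⁿ) = n·H(P) + O(n·μ_n)`, and the
law of `Ỹ_T` is an average of empirical types, hence `μ_n`-close to `P`, so `H(Ỹ_T) → H(P)`.
Both estimates need `Δ_k > 0`, which holds eventually: by Chebyshev the atypical set has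
probability `O(n^{−1/3})`, so `Δ_k ≥ 1 − α_{k,n} − o(1)` while `limsup α_{k,n} ≤ ε_k < 1`.
The rate bound is `H(M̃_ℓ) ≤ log |range M̃_ℓ|`, and the last inequality is data processing,
`Ỹ_{ℓ−1,T}` being a function of `Ỹ_T`.
-/

section FiniteEntropy

open Classical

variable {Ω α β γ : Type*} [Fintype Ω] {p : Ω → ℝ}

lemma probEq_nonneg (hp : ∀ ω, 0 ≤ p ω) (X : Ω → α) (a : α) : 0 ≤ probEq p X a :=
  Finset.sum_nonneg fun ω _ => by split_ifs <;> simp [hp ω]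

lemma le_probEq (hp : ∀ ω, 0 ≤ p ω) (X : Ω → α) (ω : Ω) : p ω ≤ probEq p X (X ω) := by
  simpa [probEq] using Finset.single_le_sum (f := fun ω' => if X ω' = X ω then p ω' else 0)
    (fun ω' _ => by split_ifs <;> simp [hp ω']) (Finset.mem_univ ω)

lemma probEq_pos (hp : ∀ ω, 0 ≤ p ω) (X : Ω → α) {ω : Ω} (h : p ω ≠ 0) :
    0 < probEq p X (X ω) :=
  ((hp ω).lt_of_ne' h).trans_le (le_probEq hp X ω)

lemma probEq_id (ω : Ω) : probEq p id ω = p ω := by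
  simp [probEq]

lemma entOf_congr {X : Ω → α} {Z : Ω → β} (h : ∀ ω ω', X ω = X ω' ↔ Z ω = Z ω') :
    entOf p X = entOf p Z := by
  unfold entOf probEq
  simp only [h]

lemma entOf_comp_of_injective {f : α → β} (hf : Function.Injective f) (X : Ω → α) :
    entOf p (fun ω => f (X ω)) = entOf p X :=
  entOf_congr fun _ _ => hf.eq_iff

lemma sum_probEq_mul (X : Ω → α) (s : Finset α) (hs : ∀ ω, X ω ∈ s) (f : α → ℝ) :
    ∑ a ∈ s, probEq p X a * f a = ∑ ω, p ω * f (X ω) := by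
  simp only [probEq, Finset.sum_mul, ite_mul, zero_mul]
  rw [Finset.sum_comm]
  simp [Finset.sum_ite_eq, hs]

lemma entOf_eq_sum_negMulLog (X : Ω → α) (s : Finset α) (hs : ∀ ω, X ω ∈ s) :
    entOf p X = (∑ a ∈ s, Real.negMulLog (probEq p X a)) / Real.log 2 := by
  rw [entOf, ← sum_probEq_mul X s hs fun a => Real.logb 2 (probEq p X a), Finset.sum_div,
    ← Finset.sum_neg_distrib]
  simp only [Real.negMulLog, Real.logb]
  exact Finset.sum_congr rfl fun a _ => by ring

lemma entOf_eq_entOf_law [Fintype α] (X : Ω → α) : entOf p X = entOf (probEq p X) id := by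
  rw [entOf_eq_sum_negMulLog X Finset.univ (by simp),
    entOf_eq_sum_negMulLog id Finset.univ (by simp)]
  simp only [probEq_id]

lemma entOf_id : entOf p id = -∑ ω, p ω * Real.logb 2 (p ω) := by
  simp only [entOf, id, probEq_id]

lemma tendsto_entOf_id {ι : Type*} {l : Filter ι} {q : ι → Ω → ℝ}
    (h : ∀ ω, Tendsto (fun i => q i ω) l (nhds (p ω))) :
    Tendsto (fun i => entOf (q i) id) l (nhds (entOf p id)) := by
  simp only [entOf_eq_sum_negMulLog id Finset.univ (fun ω => Finset.mem_univ ω), probEq_id]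
  exact (tendsto_finsetSum _ fun ω _ =>
    (Real.continuous_negMulLog.tendsto _).comp (h ω)).div_const _

lemma entOf_le_logb_card (hp : ∀ ω, 0 ≤ p ω) (hsum : ∑ ω, p ω = 1) (X : Ω → α)
    (s : Finset α) (hs : ∀ ω, X ω ∈ s) : entOf p X ≤ Real.logb 2 s.card := by
  obtain ⟨ω₀⟩ : Nonempty Ω := by
    by_contra h
    simp [not_nonempty_iff.mp h] at hsum
  have hcard : (0 : ℝ) < s.card := by exact_mod_cast Finset.card_pos.mpr ⟨_, hs ω₀⟩
  have hmass : ∑ a ∈ s, probEq p X a = 1 := by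
    simpa [hsum] using sum_probEq_mul (p := p) X s hs (fun _ => 1)
  have jensen := Real.concaveOn_negMulLog.le_map_sum (t := s) (w := fun _ => (s.card : ℝ)⁻¹)
    (p := probEq p X) (fun _ _ => by positivity) (by simp [hcard.ne'])
    (fun a _ => Set.mem_Ici.mpr (probEq_nonneg hp X a))
  have uniform : Real.negMulLog (s.card : ℝ)⁻¹ = (s.card : ℝ)⁻¹ * Real.log s.card := by
    simp [Real.negMulLog, Real.log_inv]
  simp only [smul_eq_mul, ← Finset.mul_sum, hmass, mul_one, uniform] at jensen
  rw [entOf_eq_sum_negMulLog X s hs, Real.logb,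
    div_le_div_iff_of_pos_right (Real.log_pos one_lt_two)]
  exact le_of_mul_le_mul_left jensen (inv_pos.mpr hcard)

lemma entOf_le_logb_of_add_one_le (hp : ∀ ω, 0 ≤ p ω) (hsum : ∑ ω, p ω = 1) (X : Ω → ℕ)
    {B : ℝ} (hX : ∀ ω, (X ω : ℝ) + 1 ≤ B) : entOf p X ≤ Real.logb 2 B := by
  obtain ⟨ω₀⟩ : Nonempty Ω := by
    by_contra h
    simp [not_nonempty_iff.mp h] at hsum
  have hB : 1 ≤ B := le_trans (by simp) (hX ω₀)
  have hlt : ∀ ω, X ω ∈ Finset.range ⌊B⌋₊ := fun ω =>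
    Finset.mem_range.mpr (Nat.lt_of_succ_le (Nat.le_floor (by exact_mod_cast hX ω)))
  refine (entOf_le_logb_card hp hsum X _ hlt).trans ?_
  rw [Finset.card_range]
  exact Real.logb_le_logb_of_le one_lt_two (by simpa using Nat.floor_pos.mpr hB)
    (Nat.floor_le (by linarith))

lemma entOf_eq_neg_sum_log (X : Ω → α) :
    entOf p X = -(∑ ω, p ω * Real.log (probEq p X (X ω))) / Real.log 2 := by
  simp only [entOf, Real.logb, ← mul_div_assoc, ← Finset.sum_div, neg_div]

lemma sum_mul_log_div_probEq_le (hp : ∀ ω, 0 ≤ p ω) (Z : Ω → γ) (s : Finset γ)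
    (hs : ∀ ω, Z ω ∈ s) {r : γ → ℝ} (hr0 : ∀ c ∈ s, 0 ≤ r c)
    (hr : ∀ ω, p ω ≠ 0 → 0 < r (Z ω)) :
    ∑ ω, p ω * Real.log (r (Z ω) / probEq p Z (Z ω)) ≤ ∑ c ∈ s, r c - ∑ ω, p ω := by
  have pointwise : ∀ ω, p ω * Real.log (r (Z ω) / probEq p Z (Z ω))
      ≤ p ω * (r (Z ω) / probEq p Z (Z ω)) - p ω := by
    intro ω
    rcases eq_or_ne (p ω) 0 with h0 | h0
    · simp [h0]
    · have := Real.log_le_sub_one_of_pos (div_pos (hr ω h0) (probEq_pos hp Z h0))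
      nlinarith [hp ω]
  have reweight : ∑ ω, p ω * (r (Z ω) / probEq p Z (Z ω)) ≤ ∑ c ∈ s, r c := by
    rw [← sum_probEq_mul Z s hs (fun c => r c / probEq p Z c)]
    refine Finset.sum_le_sum fun c hc => ?_
    rcases eq_or_ne (probEq p Z c) 0 with h0 | h0
    · simp [h0, hr0 c hc]
    · rw [mul_div_cancel₀ _ h0]
  calc _ ≤ ∑ ω, (p ω * (r (Z ω) / probEq p Z (Z ω)) - p ω) :=
        Finset.sum_le_sum fun ω _ => pointwise ω
    _ ≤ _ := by rw [Finset.sum_sub_distrib]; linarith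

lemma sum_probEq_pair (C : Ω → γ) (A : Ω → α) (c : γ) :
    ∑ a ∈ Finset.univ.image A, probEq p (fun ω => (C ω, A ω)) (c, a) = probEq p C c := by
  simp only [probEq, Prod.mk.injEq]
  rw [Finset.sum_comm]
  refine Finset.sum_congr rfl fun ω _ => ?_
  by_cases hc : C ω = c <;> simp [hc, Finset.sum_ite_eq]

-- Gibbs' inequality against the law making `A` and `B` conditionally independent given `C`.
lemma entOf_submod (hp : ∀ ω, 0 ≤ p ω) (C : Ω → γ) (A : Ω → α) (B : Ω → β) :
    entOf p (fun ω => (C ω, A ω, B ω)) + entOf p C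
      ≤ entOf p (fun ω => (C ω, A ω)) + entOf p (fun ω => (C ω, B ω)) := by
  set qCA := probEq p (fun ω => (C ω, A ω))
  set qCB := probEq p (fun ω => (C ω, B ω))
  set qC := probEq p C
  set Z : Ω → γ × α × β := fun ω => (C ω, A ω, B ω)
  set r : γ × α × β → ℝ := fun v => qCA (v.1, v.2.1) * qCB (v.1, v.2.2) / qC v.1
  set s := Finset.univ.image C ×ˢ (Finset.univ.image A ×ˢ Finset.univ.image B)
  have mass : ∑ v ∈ s, r v = ∑ ω, p ω := by
    simp only [s, r, Finset.sum_product, ← Finset.sum_div, ← Finset.sum_mul_sum, qCA, qCB,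
      sum_probEq_pair, qC, mul_self_div_self]
    simpa using sum_probEq_mul (p := p) C _ (by simp) (fun _ => 1)
  have gibbs := sum_mul_log_div_probEq_le hp Z s (by simp [s, Z]) (r := r)
    (fun v _ => div_nonneg (mul_nonneg (probEq_nonneg hp _ _) (probEq_nonneg hp _ _))
      (probEq_nonneg hp _ _))
    (fun ω h => div_pos (mul_pos (probEq_pos hp _ h) (probEq_pos hp _ h)) (probEq_pos hp _ h))
  have expand : ∀ ω, p ω * Real.log (r (Z ω) / probEq p Z (Z ω))
      = p ω * Real.log (qCA (C ω, A ω)) + p ω * Real.log (qCB (C ω, B ω))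
        - p ω * Real.log (qC (C ω)) - p ω * Real.log (probEq p Z (Z ω)) := by
    intro ω
    rcases eq_or_ne (p ω) 0 with h0 | h0
    · simp [h0]
    have := probEq_pos hp (fun ω => (C ω, A ω)) h0
    have := probEq_pos hp (fun ω => (C ω, B ω)) h0
    have := probEq_pos hp C h0
    have := probEq_pos hp Z h0
    simp only [r]
    rw [Real.log_div (by positivity) (by positivity), Real.log_div (by positivity) (by positivity),
      Real.log_mul (by positivity) (by positivity)]
    ring
  rw [mass, sub_self, Finset.sum_congr rfl fun ω _ => expand ω] at gibbs
  simp only [Finset.sum_sub_distrib, Finset.sum_add_distrib] at gibbs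
  rw [entOf_eq_neg_sum_log, entOf_eq_neg_sum_log C, entOf_eq_neg_sum_log,
    entOf_eq_neg_sum_log, ← add_div, ← add_div,
    div_le_div_iff_of_pos_right (Real.log_pos one_lt_two)]
  linarith

lemma miOf_comm (X : Ω → α) (Z : Ω → β) : miOf p X Z = miOf p Z X := by
  have swap := entOf_comp_of_injective (p := p) Prod.swap_injective fun ω => (Z ω, X ω)
  simp only [Prod.swap_prod_mk] at swap
  simp only [miOf, swap]
  ring

lemma miOf_comp_right_le (hp : ∀ ω, 0 ≤ p ω) (X : Ω → α) (Z : Ω → β) (f : β → γ) :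
    miOf p X (fun ω => f (Z ω)) ≤ miOf p X Z := by
  have submod := entOf_submod hp (fun ω => f (Z ω)) X Z
  have hXZ := entOf_comp_of_injective (p := p) (f := fun v : α × β => (f v.2, v.1, v.2))
    (fun v w h => by simp_all [Prod.ext_iff]) fun ω => (X ω, Z ω)
  have hZ := entOf_comp_of_injective (p := p) (f := fun z => (f z, z))
    (fun v w h => by simp_all [Prod.ext_iff]) Z
  have hswap := entOf_comp_of_injective (p := p) Prod.swap_injective fun ω => (X ω, f (Z ω))
  simp only [Prod.swap_prod_mk] at hswap
  simp only [miOf]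
  linarith

end FiniteEntropy

section ProbSet

open Classical

variable {Ω : Type*} [Fintype Ω] {p : Ω → ℝ}

lemma probSet_nonneg (hp : ∀ ω, 0 ≤ p ω) (S : Set Ω) : 0 ≤ probSet p S :=
  Finset.sum_nonneg fun ω _ => by split_ifs <;> simp [hp ω]

lemma probSet_mono (hp : ∀ ω, 0 ≤ p ω) {S T : Set Ω} (h : S ⊆ T) :
    probSet p S ≤ probSet p T :=
  Finset.sum_le_sum fun ω _ => by
    by_cases hS : ω ∈ S
    · simp [hS, h hS]
    · simp only [hS, if_false]; split_ifs <;> simp [hp ω]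

lemma probSet_compl (S : Set Ω) : probSet p Sᶜ = ∑ ω, p ω - probSet p S := by
  rw [eq_sub_iff_add_eq, probSet, probSet, ← Finset.sum_add_distrib]
  exact Finset.sum_congr rfl fun ω _ => by by_cases h : ω ∈ S <;> simp [h]

lemma probSet_sub_probSet_compl_le_inter (hp : ∀ ω, 0 ≤ p ω) (A B : Set Ω) :
    probSet p A - probSet p Bᶜ ≤ probSet p (A ∩ B) := by
  rw [probSet, probSet, probSet, ← Finset.sum_sub_distrib]
  exact Finset.sum_le_sum fun ω _ => by
    by_cases hA : ω ∈ A <;> by_cases hB : ω ∈ B <;> simp [hA, hB, hp ω]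

lemma probSet_union_le (hp : ∀ ω, 0 ≤ p ω) (S T : Set Ω) :
    probSet p (S ∪ T) ≤ probSet p S + probSet p T := by
  rw [probSet, probSet, probSet, ← Finset.sum_add_distrib]
  exact Finset.sum_le_sum fun ω _ => by
    by_cases hS : ω ∈ S <;> by_cases hT : ω ∈ T <;> simp [hS, hT, hp ω]

lemma probSet_iUnion_le {ι : Type*} [Fintype ι] (hp : ∀ ω, 0 ≤ p ω) (S : ι → Set Ω) :
    probSet p (⋃ i, S i) ≤ ∑ i, probSet p (S i) := by
  simp only [probSet]
  rw [Finset.sum_comm]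
  refine Finset.sum_le_sum fun ω _ => ?_
  by_cases h : ω ∈ ⋃ i, S i
  · obtain ⟨i, hi⟩ := Set.mem_iUnion.mp h
    rw [if_pos h]
    exact le_trans (by simp [hi]) (Finset.single_le_sum (f := fun i => if ω ∈ S i then p ω else 0)
      (fun i _ => by split_ifs <;> simp [hp ω]) (Finset.mem_univ i))
  · rw [if_neg h]
    exact Finset.sum_nonneg fun i _ => by split_ifs <;> simp [hp ω]

lemma probSet_eq_zero {S : Set Ω} (h : ∀ ω ∈ S, p ω = 0) : probSet p S = 0 :=
  Finset.sum_eq_zero fun ω _ => by split_ifs with hS <;> simp [h ω, hS]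

lemma probSet_le_sum_mul_div (hp : ∀ ω, 0 ≤ p ω) {f : Ω → ℝ} (hf : ∀ ω, 0 ≤ f ω) {c : ℝ}
    (hc : 0 < c) : probSet p {ω | c ≤ f ω} ≤ (∑ ω, p ω * f ω) / c := by
  rw [Finset.sum_div]
  refine Finset.sum_le_sum fun ω _ => ?_
  split_ifs with h
  · rw [le_div_iff₀ hc]
    exact mul_le_mul_of_nonneg_left h (hp ω)
  · exact div_nonneg (mul_nonneg (hp ω) (hf ω)) hc.le

end ProbSet

section IIDConcentration

open Classical

lemma Ncount_eq_sum {W : Type*} {n : ℕ} (w : Fin n → W) (a : W) :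
    (Ncount w a : ℝ) = ∑ t, if w t = a then 1 else 0 := by
  simp [Ncount, Finset.sum_boole]

variable {W : Type*} [Fintype W] {P : W → ℝ} {n : ℕ}

lemma sum_prod_mul_prod (h : Fin n → W → ℝ) :
    ∑ w : Fin n → W, (∏ s, P (w s)) * ∏ s, h s (w s) = ∏ s, ∑ y, P y * h s y := by
  rw [Fintype.prod_sum]
  simp only [Finset.prod_mul_distrib]

lemma sum_prod_mul_apply (hP1 : ∑ y, P y = 1) (t : Fin n) (h : W → ℝ) :
    ∑ w : Fin n → W, (∏ s, P (w s)) * h (w t) = ∑ y, P y * h y := by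
  have key := sum_prod_mul_prod (P := P) fun s y => if s = t then h y else 1
  simp only [Finset.prod_ite_eq', Finset.mem_univ, if_true] at key
  rw [key]
  calc _ = ∏ s, if s = t then ∑ y, P y * h y else 1 :=
        Finset.prod_congr rfl fun s _ => by split_ifs <;> simp [hP1]
    _ = _ := by simp

lemma sum_prod_mul_apply_mul_apply (hP1 : ∑ y, P y = 1) {t t' : Fin n} (htt' : t ≠ t')
    (h h' : W → ℝ) :
    ∑ w : Fin n → W, (∏ s, P (w s)) * (h (w t) * h' (w t'))
      = (∑ y, P y * h y) * ∑ y, P y * h' y := by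
  have key := sum_prod_mul_prod (P := P)
    fun s y => (if s = t then h y else 1) * (if s = t' then h' y else 1)
  simp only [Finset.prod_mul_distrib, Finset.prod_ite_eq', Finset.mem_univ, if_true] at key
  rw [key]
  calc _ = ∏ s, (if s = t then ∑ y, P y * h y else 1)
        * (if s = t' then ∑ y, P y * h' y else 1) := by
        refine Finset.prod_congr rfl fun s _ => ?_
        by_cases hs : s = t
        · subst hs; simp [htt']
        · by_cases hs' : s = t'
          · subst hs'; simp [hs]
          · simp [hs, hs', hP1]
    _ = _ := by rw [Finset.prod_mul_distrib]; simp

lemma sum_prod_mul_Ncount_sub_sq_le (hP0 : ∀ y, 0 ≤ P y) (hP1 : ∑ y, P y = 1) (a : W) :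
    ∑ w : Fin n → W, (∏ s, P (w s)) * ((Ncount w a : ℝ) - n * P a) ^ 2 ≤ n := by
  set g : W → ℝ := fun y => (if y = a then 1 else 0) - P a
  have centered : ∑ y, P y * g y = 0 := by
    simp [g, mul_sub, Finset.sum_sub_distrib, ← Finset.sum_mul, hP1]
  have bounded : ∀ y, g y * g y ≤ 1 := by
    have : P a ≤ 1 := hP1 ▸ Finset.single_le_sum (fun y _ => hP0 y) (Finset.mem_univ a)
    intro y; simp only [g]; split_ifs <;> nlinarith [hP0 a]
  have expand : ∀ w : Fin n → W, ((Ncount w a : ℝ) - n * P a) ^ 2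
      = ∑ t, ∑ t', g (w t) * g (w t') := by
    intro w
    rw [← Finset.sum_mul_sum, ← sq, Ncount_eq_sum]
    simp [g, Finset.sum_sub_distrib]
  have covariance : ∀ t t' : Fin n,
      ∑ w : Fin n → W, (∏ s, P (w s)) * (g (w t) * g (w t')) ≤ if t = t' then 1 else 0 := by
    intro t t'
    split_ifs with htt'
    · subst htt'
      rw [sum_prod_mul_apply hP1 t fun y => g y * g y, ← hP1]
      exact Finset.sum_le_sum fun y _ => by nlinarith [hP0 y, bounded y]
    · rw [sum_prod_mul_apply_mul_apply hP1 htt', centered, zero_mul]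
  calc ∑ w : Fin n → W, (∏ s, P (w s)) * ((Ncount w a : ℝ) - n * P a) ^ 2
      = ∑ t, ∑ t', ∑ w : Fin n → W, (∏ s, P (w s)) * (g (w t) * g (w t')) := by
        simp only [expand, Finset.mul_sum]
        rw [Finset.sum_comm]
        exact Finset.sum_congr rfl fun t _ => Finset.sum_comm
    _ ≤ ∑ t : Fin n, ∑ t' : Fin n, if t = t' then (1 : ℝ) else 0 :=
        Finset.sum_le_sum fun t _ => Finset.sum_le_sum fun t' _ => covariance t t'
    _ = n := by simp

lemma probSet_compl_typicalSet_le (hP0 : ∀ y, 0 ≤ P y) (hP1 : ∑ y, P y = 1) {μ : ℝ}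
    (hμ : 0 < μ) (hn : 0 < n) :
    probSet (fun w : Fin n → W => ∏ t, P (w t)) (typicalSet P μ n)ᶜ
      ≤ Fintype.card W / (n * μ ^ 2) := by
  have hp : ∀ w : Fin n → W, 0 ≤ ∏ t, P (w t) := fun w => Finset.prod_nonneg fun t _ => hP0 _
  have hn0 : (0 : ℝ) < n := by exact_mod_cast hn
  have cover : (typicalSet P μ n)ᶜ ⊆ ⋃ a, ({w | (n * μ) ^ 2 ≤ ((Ncount w a : ℝ) - n * P a) ^ 2}
      ∪ {w | P a = 0 ∧ Ncount w a ≠ 0}) := by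
    intro w hw
    simp only [typicalSet, Set.mem_compl_iff, Set.mem_ofPred_eq, not_forall, not_and_or,
      not_le] at hw
    obtain ⟨a, ha | ha⟩ := hw
    · refine Set.mem_iUnion.mpr ⟨a, Or.inl ?_⟩
      have : (Ncount w a : ℝ) - n * P a = n * ((Ncount w a : ℝ) / n - P a) := by
        field_simp
      rw [Set.mem_ofPred_eq, this, mul_pow, mul_pow, ← sq_abs ((Ncount w a : ℝ) / n - P a)]
      gcongr
    · exact Set.mem_iUnion.mpr ⟨a, Or.inr (by simpa using ha)⟩
  have chebyshev : ∀ a, probSet (fun w : Fin n → W => ∏ t, P (w t))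
      {w | (n * μ) ^ 2 ≤ ((Ncount w a : ℝ) - n * P a) ^ 2} ≤ 1 / (n * μ ^ 2) := by
    intro a
    refine (probSet_le_sum_mul_div hp (fun w => sq_nonneg _) (by positivity)).trans ?_
    calc _ ≤ (n : ℝ) / (n * μ) ^ 2 := by
          gcongr; exact sum_prod_mul_Ncount_sub_sq_le hP0 hP1 a
      _ = 1 / (n * μ ^ 2) := by field_simp
  have impossible : ∀ a, probSet (fun w : Fin n → W => ∏ t, P (w t))
      {w | P a = 0 ∧ Ncount w a ≠ 0} = 0 := by
    refine fun a => probSet_eq_zero fun w ⟨hPa, hN⟩ => ?_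
    obtain ⟨t, ht⟩ : ∃ t, w t = a := by
      by_contra! h
      exact hN (by simp [Ncount, h])
    exact Finset.prod_eq_zero (Finset.mem_univ t) (ht ▸ hPa)
  calc _ ≤ ∑ a, probSet (fun w : Fin n → W => ∏ t, P (w t))
        ({w | (n * μ) ^ 2 ≤ ((Ncount w a : ℝ) - n * P a) ^ 2} ∪ {w | P a = 0 ∧ Ncount w a ≠ 0}) :=
        (probSet_mono hp cover).trans (probSet_iUnion_le hp _)
    _ ≤ ∑ _a : W, 1 / (n * μ ^ 2) := Finset.sum_le_sum fun a _ =>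
        (probSet_union_le hp _ _).trans (by rw [impossible, add_zero]; exact chebyshev a)
    _ = _ := by simp [div_eq_mul_inv]

end IIDConcentration

lemma abs_sum_mul_sub_le {Ω : Type*} [Fintype Ω] {q f : Ω → ℝ} (hq0 : ∀ ω, 0 ≤ q ω)
    (hq1 : ∑ ω, q ω = 1) {a c : ℝ} (h : ∀ ω, q ω ≠ 0 → |f ω - a| ≤ c) :
    |∑ ω, q ω * f ω - a| ≤ c := by
  have centered : ∑ ω, q ω * f ω - a = ∑ ω, q ω * (f ω - a) := by
    simp [mul_sub, Finset.sum_sub_distrib, ← Finset.sum_mul, hq1]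
  rw [centered]
  calc _ ≤ ∑ ω, |q ω * (f ω - a)| := Finset.abs_sum_le_sum_abs _ _
    _ ≤ ∑ ω, q ω * c := Finset.sum_le_sum fun ω _ => by
        rcases eq_or_ne (q ω) 0 with h0 | h0
        · simp [h0]
        · rw [abs_mul, abs_of_nonneg (hq0 ω)]
          exact mul_le_mul_of_nonneg_left (h ω h0) (hq0 ω)
    _ = c := by rw [← Finset.sum_mul, hq1, one_mul]

section Conditioning

open Classical

variable {Ω : Type*} [Fintype Ω] {p : Ω → ℝ} {D : Set Ω}

def condOn (p : Ω → ℝ) (D : Set Ω) (ω : Ω) : ℝ :=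
  if ω ∈ D then p ω / probSet p D else 0

lemma condOn_nonneg (hp : ∀ ω, 0 ≤ p ω) (ω : Ω) : 0 ≤ condOn p D ω := by
  unfold condOn
  split_ifs
  · exact div_nonneg (hp ω) (probSet_nonneg hp D)
  · exact le_rfl

lemma sum_condOn (hD : probSet p D ≠ 0) : ∑ ω, condOn p D ω = 1 := by
  have h : ∀ ω, condOn p D ω = (if ω ∈ D then p ω else 0) / probSet p D := fun ω => by
    unfold condOn; split_ifs <;> simp
  simp only [h, ← Finset.sum_div]
  exact div_self hD

lemma condOn_of_probSet_eq_zero (hD : probSet p D = 0) (ω : Ω) : condOn p D ω = 0 := by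
  simp [condOn, hD]

lemma mem_of_condOn_ne_zero {ω : Ω} (h : condOn p D ω ≠ 0) : ω ∈ D ∧ p ω ≠ 0 := by
  unfold condOn at h
  split_ifs at h with hω
  · exact ⟨hω, fun h0 => h (by simp [h0])⟩
  · exact absurd rfl h

lemma entOf_condOn_id (hD : probSet p D ≠ 0) :
    entOf (condOn p D) id
      = Real.logb 2 (probSet p D) - ∑ ω, condOn p D ω * Real.logb 2 (p ω) := by
  have pointwise : ∀ ω, condOn p D ω * Real.logb 2 (condOn p D ω)
      = condOn p D ω * Real.logb 2 (p ω) - condOn p D ω * Real.logb 2 (probSet p D) := by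
    intro ω
    rcases eq_or_ne (condOn p D ω) 0 with h0 | h0
    · simp [h0]
    · obtain ⟨hω, hp⟩ := mem_of_condOn_ne_zero h0
      rw [← mul_sub, condOn, if_pos hω, Real.logb_div hp hD]
  rw [entOf_id, Finset.sum_congr rfl fun ω _ => pointwise ω, Finset.sum_sub_distrib,
    ← Finset.sum_mul, sum_condOn hD]
  ring

end Conditioning

section TimeSharing

open Classical

variable {Θ α : Type*} [Fintype Θ] {pt : Θ → ℝ} {n : ℕ}

lemma probEq_comp_fst (hn : 0 < n) (f : Θ → α) (a : α) :
    probEq (fun ω : Θ × Fin n => pt ω.1 / n) (fun ω => f ω.1) a = probEq pt f a := by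
  simp only [probEq, Fintype.sum_prod_type]
  refine Finset.sum_congr rfl fun θ _ => ?_
  split_ifs
  · simp [mul_div_cancel₀ _ (by positivity : (n : ℝ) ≠ 0)]
  · simp

lemma entOf_comp_fst (hn : 0 < n) (f : Θ → α) :
    entOf (fun ω : Θ × Fin n => pt ω.1 / n) (fun ω => f ω.1) = entOf pt f := by
  simp only [entOf, probEq_comp_fst hn, Fintype.sum_prod_type, Finset.sum_const,
    Finset.card_univ, Fintype.card_fin, nsmul_eq_mul]
  congr 1
  refine Finset.sum_congr rfl fun θ _ => ?_
  field_simp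

lemma probEq_timeShare (V : Fin n → Θ → α) (t : Fin n) (θ : Θ) :
    probEq (fun ω : Θ × Fin n => pt ω.1 / n) (fun ω => (V ω.2 ω.1, ω.2)) (V t θ, t)
      = probEq pt (V t) (V t θ) / n := by
  simp only [probEq, Fintype.sum_prod_type, Prod.mk.injEq, Finset.sum_div]
  refine Finset.sum_congr rfl fun θ' _ => ?_
  rw [Finset.sum_eq_single t (fun x _ hx => by simp [hx]) (by simp)]
  split_ifs <;> simp_all

lemma entOf_timeShare (hp : ∀ θ, 0 ≤ pt θ) (hsum : ∑ θ, pt θ = 1) (hn : 0 < n)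
    (V : Fin n → Θ → α) :
    n * entOf (fun ω : Θ × Fin n => pt ω.1 / n) (fun ω => (V ω.2 ω.1, ω.2))
      = n * Real.logb 2 n + ∑ t, entOf pt (V t) := by
  have hn0 : (n : ℝ) ≠ 0 := by positivity
  have pointwise : ∀ t θ, pt θ * Real.logb 2 (probEq pt (V t) (V t θ) / n)
      = pt θ * Real.logb 2 (probEq pt (V t) (V t θ)) - pt θ * Real.logb 2 n := by
    intro t θ
    rcases eq_or_ne (pt θ) 0 with h0 | h0
    · simp [h0]
    · rw [Real.logb_div (probEq_pos hp (V t) h0).ne' hn0, mul_sub]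
  simp only [entOf, probEq_timeShare, Fintype.sum_prod_type, mul_neg, Finset.mul_sum]
  rw [Finset.sum_comm]
  simp only [← mul_assoc, mul_div_cancel₀ _ hn0, pointwise, Finset.sum_sub_distrib,
    ← Finset.sum_mul, hsum, one_mul, Finset.sum_const, Finset.card_univ, Fintype.card_fin,
    nsmul_eq_mul, Finset.sum_neg_distrib]
  ring

lemma probEq_timeSlice (w : Θ → Fin n → α) (a : α) :
    probEq (fun ω : Θ × Fin n => pt ω.1 / n) (fun ω => w ω.1 ω.2) a
      = ∑ θ, pt θ * (Ncount (w θ) a / n) := by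
  simp only [probEq, Fintype.sum_prod_type, Ncount_eq_sum, Finset.sum_div, Finset.mul_sum]
  exact Finset.sum_congr rfl fun θ _ => Finset.sum_congr rfl fun t _ => by split_ifs <;> ring

end TimeSharing

lemma sum_comp_eq_sum_Ncount_mul {W : Type*} [Fintype W] {n : ℕ} (w : Fin n → W)
    (f : W → ℝ) : ∑ t, f (w t) = ∑ a, (Ncount w a : ℝ) * f a := by
  simp only [Ncount_eq_sum, Finset.sum_mul, ite_mul, one_mul, zero_mul]
  rw [Finset.sum_comm]
  refine Finset.sum_congr rfl fun t _ => ?_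
  rw [Finset.sum_eq_single (w t) (fun b _ hb => if_neg (Ne.symm hb)) (by simp), if_pos rfl]

lemma abs_neg_logb_prod_sub_le {W : Type*} [Fintype W] {P : W → ℝ} {μ : ℝ} {n : ℕ}
    (hn : 0 < n) {w : Fin n → W} (hw : w ∈ typicalSet P μ n) (hw0 : ∏ t, P (w t) ≠ 0) :
    |-Real.logb 2 (∏ t, P (w t)) - n * entOf P id| ≤ n * μ * ∑ a, |Real.logb 2 (P a)| := by
  have hn0 : (0 : ℝ) < n := by exact_mod_cast hn
  rw [Real.logb_prod _ _ fun t _ => Finset.prod_ne_zero_iff.mp hw0 t (Finset.mem_univ t),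
    sum_comp_eq_sum_Ncount_mul w fun a => Real.logb 2 (P a), entOf_id, Finset.mul_sum]
  have regroup : -∑ a, (Ncount w a : ℝ) * Real.logb 2 (P a) - n * -∑ a, P a * Real.logb 2 (P a)
      = ∑ a, (n * P a - Ncount w a) * Real.logb 2 (P a) := by
    simp only [sub_mul, Finset.sum_sub_distrib, mul_assoc, ← Finset.mul_sum]
    ring
  have deviation : ∀ a, |(n : ℝ) * P a - Ncount w a| ≤ n * μ := by
    intro a
    have : (n : ℝ) * P a - Ncount w a = -(n * (Ncount w a / n - P a)) := by field_simp; ring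
    rw [this, abs_neg, abs_mul, abs_of_pos hn0]
    exact mul_le_mul_of_nonneg_left (hw a).1 hn0.le
  rw [regroup]
  refine (Finset.abs_sum_le_sum_abs _ _).trans (Finset.sum_le_sum fun a _ => ?_)
  rw [abs_mul]
  exact mul_le_mul_of_nonneg_right (deviation a) (abs_nonneg _)

lemma tendsto_μseq : Tendsto μseq atTop (nhds 0) :=
  (tendsto_rpow_neg_atTop (by norm_num : (0 : ℝ) < 1 / 3)).comp tendsto_natCast_atTop_atTop

lemma tendsto_mul_μseq_sq : Tendsto (fun n : ℕ => (n : ℝ) * μseq n ^ 2) atTop atTop := by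
  refine ((tendsto_rpow_atTop (by norm_num : (0 : ℝ) < 1 / 3)).comp
    tendsto_natCast_atTop_atTop).congr' ?_
  filter_upwards [eventually_gt_atTop 0] with n hn
  have hn0 : (0 : ℝ) < n := by exact_mod_cast hn
  rw [Function.comp_apply, μseq, ← Real.rpow_natCast, ← Real.rpow_mul hn0.le,
    ← Real.rpow_one_add' hn0.le (by norm_num)]
  norm_num

lemma iidK_nonneg {k : ℕ} {Y : ℕ → Type} {P : (∀ i : Fin (k + 1), Y i) → ℝ} {n : ℕ}
    (hP0 : ∀ y, 0 ≤ P y) (ys : ∀ i : Fin (k + 1), Fin n → Y i) : 0 ≤ iidK k Y P n ys :=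
  Finset.prod_nonneg fun _ _ => hP0 _

section IIDSource

open Classical

variable {k : ℕ} {Y : ℕ → Type} [∀ i, Fintype (Y i)] {P : (∀ i : Fin (k + 1), Y i) → ℝ} {n : ℕ}

lemma sum_comp_tupleSeq (F : (Fin n → ∀ i : Fin (k + 1), Y i) → ℝ) :
    ∑ ys : ∀ i : Fin (k + 1), Fin n → Y i, F (tupleSeq k Y ys) = ∑ w, F w :=
  Equiv.sum_comp (Equiv.piComm fun (i : Fin (k + 1)) (_ : Fin n) => Y i) F

lemma sum_iidK (hP1 : ∑ y, P y = 1) : ∑ ys, iidK k Y P n ys = 1 := by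
  calc ∑ ys, iidK k Y P n ys = ∑ w : Fin n → _, ∏ t, P (w t) :=
        sum_comp_tupleSeq fun w => ∏ t, P (w t)
    _ = 1 := by simpa [hP1] using sum_prod_mul_prod (P := P) (n := n) fun _ _ => 1

lemma probSet_iidK_preimage_tupleSeq (S : Set (Fin n → ∀ i : Fin (k + 1), Y i)) :
    probSet (iidK k Y P n) (tupleSeq k Y ⁻¹' S) = probSet (fun w => ∏ t, P (w t)) S :=
  sum_comp_tupleSeq fun w => if w ∈ S then ∏ t, P (w t) else 0

lemma probSet_iidK_not_typical_le (hP0 : ∀ y, 0 ≤ P y) (hP1 : ∑ y, P y = 1) {μ : ℝ}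
    (hμ : 0 < μ) (hn : 0 < n) :
    probSet (iidK k Y P n) {ys | tupleSeq k Y ys ∈ typicalSet P μ n}ᶜ
      ≤ Fintype.card (∀ i : Fin (k + 1), Y i) / (n * μ ^ 2) :=
  (probSet_iidK_preimage_tupleSeq _).trans_le (probSet_compl_typicalSet_le hP0 hP1 hμ hn)

end IIDSource

section ChainRule

variable {k : ℕ} {Y : ℕ → Type} {n : ℕ}

-- `prefixAll k Y n (ys, t)` is `prefixUpTo t ys`; here `m` may also be `n`, the whole tuple.
def prefixUpTo (m : ℕ) (ys : ∀ i : Fin (k + 1), Fin n → Y i) :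
    ∀ i : Fin (k + 1), Fin n → Option (Y i) :=
  fun i t => if (t : ℕ) < m then some (ys i t) else none

lemma prefixUpTo_succ_eq_iff (ys ys' : ∀ i : Fin (k + 1), Fin n → Y i) (t : Fin n) :
    prefixUpTo (t + 1) ys = prefixUpTo (t + 1) ys'
      ↔ prefixUpTo t ys = prefixUpTo t ys' ∧ (fun i => ys i t) = fun i => ys' i t := by
  simp only [prefixUpTo, funext_iff]
  constructor
  · intro h
    refine ⟨fun i s => ?_, fun i => by simpa using h i t⟩
    by_cases hs : (s : ℕ) < t
    · simpa [hs, Nat.lt_succ_of_lt hs] using h i s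
    · simp [hs]
  · rintro ⟨hpre, hslice⟩ i s
    rcases lt_trichotomy (s : ℕ) t with hs | hs | hs
    · simpa [hs, Nat.lt_succ_of_lt hs] using hpre i s
    · obtain rfl : s = t := Fin.ext hs
      simpa using hslice i
    · have : ¬ (s : ℕ) < t + 1 := by omega
      simp [this]

lemma prefixUpTo_self_eq_iff (ys ys' : ∀ i : Fin (k + 1), Fin n → Y i) :
    prefixUpTo n ys = prefixUpTo n ys' ↔ ys = ys' := by
  simp [prefixUpTo, funext_iff]

lemma prefixUpTo_zero (ys : ∀ i : Fin (k + 1), Fin n → Y i) :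
    prefixUpTo 0 ys = fun _ _ => none :=
  rfl

variable [∀ i, Fintype (Y i)] {β : Type*} {pt : (∀ i : Fin (k + 1), Fin n → Y i) → ℝ}

lemma mul_miOf_slice_prefix (hpt0 : ∀ ys, 0 ≤ pt ys) (hpt1 : ∑ ys, pt ys = 1) (hn : 0 < n)
    (M : (∀ i : Fin (k + 1), Fin n → Y i) → β) :
    n * miOf (fun ω : (∀ i : Fin (k + 1), Fin n → Y i) × Fin n => pt ω.1 / n)
        (fun ω i => ω.1 i ω.2) (fun ω => (M ω.1, prefixAll k Y n ω, ω.2))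
      = n * entOf (fun ω : (∀ i : Fin (k + 1), Fin n → Y i) × Fin n => pt ω.1 / n)
          (fun ω i => ω.1 i ω.2) + entOf pt M - entOf pt id := by
  set Hpre : ℕ → ℝ := fun m => entOf pt fun ys => (M ys, prefixUpTo m ys)
  have hU : n * entOf (fun ω : (∀ i : Fin (k + 1), Fin n → Y i) × Fin n => pt ω.1 / n)
      (fun ω => (M ω.1, prefixAll k Y n ω, ω.2)) = n * Real.logb 2 n + ∑ t : Fin n, Hpre t := by
    rw [← entOf_timeShare hpt0 hpt1 hn fun t ys => (M ys, prefixUpTo t ys)]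
    refine congrArg _ (entOf_congr fun ω ω' => ?_)
    simp only [Prod.mk.injEq, and_assoc]
    exact Iff.rfl
  have hXU : n * entOf (fun ω : (∀ i : Fin (k + 1), Fin n → Y i) × Fin n => pt ω.1 / n)
      (fun ω => ((fun i => ω.1 i ω.2), M ω.1, prefixAll k Y n ω, ω.2))
        = n * Real.logb 2 n + ∑ t : Fin n, Hpre (t + 1) := by
    rw [← entOf_timeShare hpt0 hpt1 hn fun t ys => (M ys, prefixUpTo (t + 1) ys)]
    refine congrArg _ (entOf_congr ?_)
    refine fun ⟨ys, t⟩ ⟨ys', t'⟩ => ?_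
    simp only [Prod.mk.injEq]
    constructor
    · rintro ⟨hslice, hM, hpre, rfl⟩
      exact ⟨⟨hM, (prefixUpTo_succ_eq_iff ys ys' t).mpr ⟨hpre, hslice⟩⟩, rfl⟩
    · rintro ⟨⟨hM, hpre⟩, rfl⟩
      obtain ⟨hpre, hslice⟩ := (prefixUpTo_succ_eq_iff ys ys' t).mp hpre
      exact ⟨hslice, hM, hpre, rfl⟩
  have telescope : ∑ t : Fin n, Hpre (t + 1) - ∑ t : Fin n, Hpre t = Hpre n - Hpre 0 := by
    rw [← Finset.sum_sub_distrib, Fin.sum_univ_eq_sum_range (fun m => Hpre (m + 1) - Hpre m),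
      Finset.sum_range_sub]
  have hfull : Hpre n = entOf pt id := entOf_congr fun ys ys' => by
    simp only [Prod.mk.injEq, prefixUpTo_self_eq_iff, id]
    exact ⟨And.right, fun h => ⟨h ▸ rfl, h⟩⟩
  have hempty : Hpre 0 = entOf pt M := entOf_congr fun ys ys' => by
    simp only [Prod.mk.injEq, prefixUpTo_zero, and_true]
  rw [miOf, mul_sub, mul_add]
  linarith

end ChainRule

def entropyCorrection (k : ℕ) (Y : ℕ → Type) [∀ i, Fintype (Y i)] [∀ i, Nonempty (Y i)]
    (P : (∀ i : Fin (k + 1), Y i) → ℝ) (n : ℕ) (φ : ∀ ℓ : ℕ, (Fin n → Y ℓ) → ℕ → ℕ)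
    (g : (Fin n → Y k) → ℕ → Bool) (j : ℕ) : ℝ :=
  entOf (pfullCM k Y P n φ g) (MtilRV k Y n φ j)
    - n * miOf (pfullCM k Y P n φ g) (fun ω i => ω.1 i ω.2) (UvarCM k Y n φ j)
    - Real.logb 2 (DeltaCM k Y P n φ g)

section ChangeOfMeasure

open Classical

variable {k : ℕ} {Y : ℕ → Type} [∀ i, Fintype (Y i)] [∀ i, Nonempty (Y i)]
  {P : (∀ i : Fin (k + 1), Y i) → ℝ} {n : ℕ} {φ : ∀ ℓ : ℕ, (Fin n → Y ℓ) → ℕ → ℕ}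
  {g : (Fin n → Y k) → ℕ → Bool}

lemma ptildeCM_eq_condOn :
    ptildeCM k Y P n φ g = condOn (iidK k Y P n) (DsetCM k Y P n φ g) :=
  rfl

lemma pfullCM_nonneg (hP0 : ∀ y, 0 ≤ P y) (ω : (∀ i : Fin (k + 1), Fin n → Y i) × Fin n) :
    0 ≤ pfullCM k Y P n φ g ω :=
  div_nonneg (condOn_nonneg (iidK_nonneg hP0) _) n.cast_nonneg

lemma alphaCM_eq (hP1 : ∑ y, P y = 1) :
    alphaCM k Y P n φ g = 1 - probSet (iidK k Y P n) (acceptSet k Y n φ g) := by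
  rw [alphaCM, probSet_compl, sum_iidK hP1]

lemma one_sub_alphaCM_sub_le_DeltaCM (hP0 : ∀ y, 0 ≤ P y) (hP1 : ∑ y, P y = 1) (hn : 0 < n) :
    1 - alphaCM k Y P n φ g - Fintype.card (∀ i : Fin (k + 1), Y i) / (n * μseq n ^ 2)
      ≤ DeltaCM k Y P n φ g := by
  have hμ : 0 < μseq n := Real.rpow_pos_of_pos (by exact_mod_cast hn) _
  have := probSet_sub_probSet_compl_le_inter (iidK_nonneg hP0) (acceptSet k Y n φ g)
    {ys | tupleSeq k Y ys ∈ typicalSet P (μseq n) n}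
  have := probSet_iidK_not_typical_le hP0 hP1 hμ hn (k := k) (Y := Y)
  rw [alphaCM_eq hP1]
  unfold DeltaCM DsetCM
  linarith

lemma entOf_MtilRV_le (hP0 : ∀ y, 0 ≤ P y) {R : ℝ} (hR : 0 ≤ R) (j : ℕ)
    (hrate : ∀ ys, (msgRec Y n φ (extendTup k Y n ys) j : ℝ) + 1 ≤ 2 ^ (n * R)) :
    entOf (pfullCM k Y P n φ g) (MtilRV k Y n φ j) ≤ n * R := by
  rcases n.eq_zero_or_pos with rfl | hn
  · simp [entOf]
  rw [show entOf (pfullCM k Y P n φ g) (MtilRV k Y n φ j)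
      = entOf (ptildeCM k Y P n φ g) fun ys => msgRec Y n φ (extendTup k Y n ys) j
    from entOf_comp_fst hn fun ys => msgRec Y n φ (extendTup k Y n ys) j]
  by_cases hΔ : DeltaCM k Y P n φ g = 0
  · simp only [entOf, ptildeCM_eq_condOn, condOn_of_probSet_eq_zero hΔ, zero_mul,
      Finset.sum_const_zero, neg_zero]
    positivity
  · calc _ ≤ Real.logb 2 (2 ^ (n * R)) :=
          entOf_le_logb_of_add_one_le (condOn_nonneg (iidK_nonneg hP0)) (sum_condOn hΔ) _ hrate
      _ = n * R := Real.logb_rpow two_pos (by norm_num)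

lemma entropyCorrection_eq (hP0 : ∀ y, 0 ≤ P y) (hn : 0 < n) (hΔ : DeltaCM k Y P n φ g ≠ 0)
    (j : ℕ) :
    entropyCorrection k Y P n φ g j
      = -∑ ys, ptildeCM k Y P n φ g ys * Real.logb 2 (iidK k Y P n ys)
        - n * entOf (pfullCM k Y P n φ g) (fun ω i => ω.1 i ω.2) := by
  set M := fun ys => msgRec Y n φ (extendTup k Y n ys) j
  have chain : n * miOf (pfullCM k Y P n φ g) (fun ω i => ω.1 i ω.2) (UvarCM k Y n φ j)
      = n * entOf (pfullCM k Y P n φ g) (fun ω i => ω.1 i ω.2)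
        + entOf (ptildeCM k Y P n φ g) M - entOf (ptildeCM k Y P n φ g) id :=
    mul_miOf_slice_prefix (condOn_nonneg (iidK_nonneg hP0)) (sum_condOn hΔ) hn M
  have message : entOf (pfullCM k Y P n φ g) (MtilRV k Y n φ j)
      = entOf (ptildeCM k Y P n φ g) M :=
    entOf_comp_fst hn M
  have source : entOf (ptildeCM k Y P n φ g) id = Real.logb 2 (DeltaCM k Y P n φ g)
      - ∑ ys, ptildeCM k Y P n φ g ys * Real.logb 2 (iidK k Y P n ys) :=
    entOf_condOn_id hΔ
  rw [entropyCorrection]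
  linarith

lemma abs_neg_sum_ptildeCM_mul_logb_iidK_sub_le (hP0 : ∀ y, 0 ≤ P y) (hn : 0 < n)
    (hΔ : DeltaCM k Y P n φ g ≠ 0) :
    |-∑ ys, ptildeCM k Y P n φ g ys * Real.logb 2 (iidK k Y P n ys) - n * entOf P id|
      ≤ n * μseq n * ∑ a, |Real.logb 2 (P a)| := by
  rw [← Finset.sum_neg_distrib]
  simp only [← mul_neg]
  exact abs_sum_mul_sub_le (condOn_nonneg (iidK_nonneg hP0)) (sum_condOn hΔ) fun ys h =>
    abs_neg_logb_prod_sub_le hn (mem_of_condOn_ne_zero h).1.2 (mem_of_condOn_ne_zero h).2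

lemma abs_probEq_slice_sub_le (hP0 : ∀ y, 0 ≤ P y) (hΔ : DeltaCM k Y P n φ g ≠ 0)
    (a : ∀ i : Fin (k + 1), Y i) :
    |probEq (pfullCM k Y P n φ g) (fun ω i => ω.1 i ω.2) a - P a| ≤ μseq n := by
  rw [show probEq (pfullCM k Y P n φ g) (fun ω i => ω.1 i ω.2) a
      = ∑ ys, ptildeCM k Y P n φ g ys * (Ncount (tupleSeq k Y ys) a / n)
    from probEq_timeSlice (tupleSeq k Y) a]
  exact abs_sum_mul_sub_le (condOn_nonneg (iidK_nonneg hP0)) (sum_condOn hΔ) fun ys h =>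
    ((mem_of_condOn_ne_zero h).1.2 a).1

end ChangeOfMeasure

section Asymptotics

variable {k : ℕ} {Y : ℕ → Type} [∀ i, Fintype (Y i)] [∀ i, Nonempty (Y i)]
  {P : (∀ i : Fin (k + 1), Y i) → ℝ} {φ : ∀ n : ℕ, ∀ ℓ : ℕ, (Fin n → Y ℓ) → ℕ → ℕ}
  {g : ∀ n : ℕ, (Fin n → Y k) → ℕ → Bool}

lemma eventually_DeltaCM_ne_zero (hP : IsPMF P) {ε : ℝ} (hε1 : ε < 1)
    (hα : limsup (fun n => alphaCM k Y P n (φ n) (g n)) atTop ≤ ε) :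
    ∀ᶠ n in atTop, DeltaCM k Y P n (φ n) (g n) ≠ 0 := by
  obtain ⟨hP0, hP1⟩ := hP
  have hα1 : ∀ n, alphaCM k Y P n (φ n) (g n) ≤ 1 := fun n => by
    rw [alphaCM_eq hP1]
    linarith [probSet_nonneg (iidK_nonneg hP0 (n := n)) (acceptSet k Y n (φ n) (g n))]
  have small_α := eventually_lt_of_limsup_lt (hα.trans_lt (by linarith : ε < (1 + ε) / 2))
    (isBoundedUnder_of ⟨1, hα1⟩)
  have small_atypical : ∀ᶠ n : ℕ in atTop,
      (Fintype.card (∀ i : Fin (k + 1), Y i) : ℝ) / (n * μseq n ^ 2) < (1 - ε) / 2 :=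
    (tendsto_const_nhds.div_atTop tendsto_mul_μseq_sq).eventually_lt_const (by linarith)
  filter_upwards [small_α, small_atypical, eventually_gt_atTop 0] with n h1 h2 hn
  have := one_sub_alphaCM_sub_le_DeltaCM hP0 hP1 hn (φ := φ n) (g := g n)
  exact (by linarith : 0 < DeltaCM k Y P n (φ n) (g n)).ne'

lemma tendsto_entOf_slice (hP0 : ∀ y, 0 ≤ P y)
    (hΔ : ∀ᶠ n in atTop, DeltaCM k Y P n (φ n) (g n) ≠ 0) :
    Tendsto (fun n => entOf (pfullCM k Y P n (φ n) (g n)) (fun ω i => ω.1 i ω.2)) atTop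
      (nhds (entOf P id)) := by
  simp only [entOf_eq_entOf_law
    (fun ω : (∀ i : Fin (k + 1), Fin _ → Y i) × Fin _ => fun i => ω.1 i ω.2)]
  refine tendsto_entOf_id fun a => ?_
  rw [tendsto_iff_dist_tendsto_zero]
  refine squeeze_zero' (Eventually.of_forall fun n => dist_nonneg) ?_ tendsto_μseq
  filter_upwards [hΔ] with n hΔn
  exact abs_probEq_slice_sub_le hP0 hΔn a

lemma tendsto_entropyCorrection_div (hP : IsPMF P) {ε : ℝ} (hε1 : ε < 1)
    (hα : limsup (fun n => alphaCM k Y P n (φ n) (g n)) atTop ≤ ε) (j : ℕ) :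
    Tendsto (fun n : ℕ => entropyCorrection k Y P n (φ n) (g n) j / n) atTop (nhds 0) := by
  have hΔ := eventually_DeltaCM_ne_zero hP hε1 hα
  set E := fun n => -∑ ys, ptildeCM k Y P n (φ n) (g n) ys * Real.logb 2 (iidK k Y P n ys)
  have logLikelihood : Tendsto (fun n : ℕ => E n / n - entOf P id) atTop (nhds 0) := by
    refine squeeze_zero_norm' ?_
      (by simpa using tendsto_μseq.mul_const (∑ a, |Real.logb 2 (P a)|))
    filter_upwards [hΔ, eventually_gt_atTop 0] with n hΔn hn
    have hn0 : (0 : ℝ) < n := by exact_mod_cast hn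
    rw [Real.norm_eq_abs, show E n / n - entOf P id = (E n - n * entOf P id) / n by field_simp,
      abs_div, abs_of_pos hn0, div_le_iff₀ hn0]
    linarith [abs_neg_sum_ptildeCM_mul_logb_iidK_sub_le hP.1 hn hΔn]
  have slice := tendsto_entOf_slice hP.1 hΔ
  have combined := logLikelihood.add (slice.const_sub (entOf P id))
  simp only [sub_self, add_zero] at combined
  refine combined.congr' ?_
  filter_upwards [hΔ, eventually_gt_atTop 0] with n hΔn hn
  rw [entropyCorrection_eq hP.1 hn hΔn j]
  field_simp
  ring

end Asymptotics

theorem khop_message_entropy_bound_general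
    (k : ℕ) (Y : ℕ → Type) [∀ i, Fintype (Y i)] [∀ i, Nonempty (Y i)]
    (P : (∀ i : Fin (k + 1), Y i) → ℝ) (hP : IsPMF P)
    (εk : ℝ) (hε1 : εk < 1)
    (Rr : Fin k → ℝ) (hR : ∀ j, 0 ≤ Rr j)
    (φ : ∀ n : ℕ, ∀ ℓ : ℕ, (Fin n → Y ℓ) → ℕ → ℕ)
    (g : ∀ n : ℕ, (Fin n → Y k) → ℕ → Bool)
    (hrate : ∀ n : ℕ, ∀ j : Fin k, ∀ ys : ∀ i : Fin (k + 1), Fin n → Y i,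
        ((msgRec Y n (φ n) (extendTup k Y n ys) (j : ℕ) : ℕ) : ℝ) + 1
          ≤ 2 ^ ((n : ℝ) * Rr j))
    (hα : limsup (fun n => alphaCM k Y P n (φ n) (g n)) atTop ≤ εk) :
    ∀ j : Fin k, ∃ o : ℕ → ℝ,
      Tendsto (fun n => o n / n) atTop (nhds 0) ∧
      ∀ n : ℕ,
        entOf (pfullCM k Y P n (φ n) (g n)) (MtilRV k Y n (φ n) (j : ℕ))
            = n * miOf (pfullCM k Y P n (φ n) (g n))
                (fun ω => (fun i : Fin (k + 1) => ω.1 i ω.2))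
                (UvarCM k Y n (φ n) (j : ℕ))
              + Real.logb 2 (DeltaCM k Y P n (φ n) (g n)) + o n ∧
        entOf (pfullCM k Y P n (φ n) (g n)) (MtilRV k Y n (φ n) (j : ℕ))
            ≤ (n : ℝ) * Rr j ∧
        n * miOf (pfullCM k Y P n (φ n) (g n))
              (UvarCM k Y n (φ n) (j : ℕ))
              (fun ω => ω.1 (idxLo k j) ω.2)
            + Real.logb 2 (DeltaCM k Y P n (φ n) (g n)) + o n
          ≤ entOf (pfullCM k Y P n (φ n) (g n)) (MtilRV k Y n (φ n) (j : ℕ)) := by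
  intro j
  refine ⟨fun n => entropyCorrection k Y P n (φ n) (g n) j,
    tendsto_entropyCorrection_div hP hε1 hα j, fun n => ⟨by simp only [entropyCorrection]; ring,
      entOf_MtilRV_le hP.1 (hR j) j (hrate n j), ?_⟩⟩
  have dpi : miOf (pfullCM k Y P n (φ n) (g n)) (UvarCM k Y n (φ n) j)
        (fun ω => ω.1 (idxLo k j) ω.2)
      ≤ miOf (pfullCM k Y P n (φ n) (g n)) (fun ω i => ω.1 i ω.2) (UvarCM k Y n (φ n) j) :=
    (miOf_comp_right_le (pfullCM_nonneg hP.1) _ (fun ω i => ω.1 i ω.2)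
      fun x => x (idxLo k j)).trans_eq (miOf_comm _ _)
  simp only [entropyCorrection]
  linarith [mul_le_mul_of_nonneg_left dpi n.cast_nonneg]

/-- message-entropy bound under the `K`-hop change of measure. With
`U_ℓ := (M̃_ℓ, Ỹ₀^{T−1},…,Ỹ_k^{T−1}, T)` (here `ℓ = j+1`), for every `ℓ ∈ {1,…,k}`
there is a correction term `o(n)` with `o(n)/n → 0` such that
`H(M̃_ℓ) = n·I(Ỹ₀,…,Ỹ_k; U_ℓ) + log Δ_k + o(n)`, and consequently
`n·R_ℓ ≥ H(M̃_ℓ) ≥ n·I(U_ℓ; Ỹ_{ℓ−1}) + log Δ_k + o(n)`. -/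
theorem khop_message_entropy_bound
    (k : ℕ) (Y : ℕ → Type) [∀ i, Fintype (Y i)] [∀ i, Nonempty (Y i)]
    (hk : 1 ≤ k)
    (P : (∀ i : Fin (k + 1), Y i) → ℝ) (hP : IsPMF P) (hMC : IsMarkovChainK k Y P)
    (εk : ℝ) (hε0 : 0 ≤ εk) (hε1 : εk < 1)
    (Rr : Fin k → ℝ) (hR : ∀ j, 0 ≤ Rr j)
    (φ : ∀ n : ℕ, ∀ ℓ : ℕ, (Fin n → Y ℓ) → ℕ → ℕ)
    (g : ∀ n : ℕ, (Fin n → Y k) → ℕ → Bool)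
    (hrate : ∀ n : ℕ, ∀ j : Fin k, ∀ ys : ∀ i : Fin (k + 1), Fin n → Y i,
        ((msgRec Y n (φ n) (extendTup k Y n ys) (j : ℕ) : ℕ) : ℝ) + 1
          ≤ 2 ^ ((n : ℝ) * Rr j))
    (hα : limsup (fun n => alphaCM k Y P n (φ n) (g n)) atTop ≤ εk) :
    ∀ j : Fin k, ∃ o : ℕ → ℝ,
      Tendsto (fun n => o n / n) atTop (nhds 0) ∧
      ∀ n : ℕ,
        entOf (pfullCM k Y P n (φ n) (g n)) (MtilRV k Y n (φ n) (j : ℕ))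
            = n * miOf (pfullCM k Y P n (φ n) (g n))
                (fun ω => (fun i : Fin (k + 1) => ω.1 i ω.2))
                (UvarCM k Y n (φ n) (j : ℕ))
              + Real.logb 2 (DeltaCM k Y P n (φ n) (g n)) + o n ∧
        entOf (pfullCM k Y P n (φ n) (g n)) (MtilRV k Y n (φ n) (j : ℕ))
            ≤ (n : ℝ) * Rr j ∧
        n * miOf (pfullCM k Y P n (φ n) (g n))
              (UvarCM k Y n (φ n) (j : ℕ))
              (fun ω => ω.1 (idxLo k j) ω.2)
            + Real.logb 2 (DeltaCM k Y P n (φ n) (g n)) + o n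
          ≤ entOf (pfullCM k Y P n (φ n) (g n)) (MtilRV k Y n (φ n) (j : ℕ)) :=
  khop_message_entropy_bound_general k Y P hP εk hε1 Rr hR φ g hrate hα
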